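/- Action of the inverse of D^{(n,s)} on an inner cutoff: let δ > 0, n ∈ ℤ, and s ∈ ℝ with |s| > δ. Let ξ₀ : [0,∞) → ℂ be bounded, continuous, differentiable on (0,∞), and assume that the functions β ↦ β·ξ₀′(β) and β ↦ β·ξ₀(β) belong to C_b^δ. Let u ∈ C_b be the unique bounded continuous solution of D^{(n,s)}u = ξ₀ on (0,∞). Then u + (1/s)·ξ₀ ∈ C_b^δ and ‖u + (1/s)·ξ₀‖_{C_b^δ} ≤ (1/|s|)·( ‖β·ξ₀′‖_{C_b^δ} + |n|·‖β·ξ₀‖_{C_b^δ} ) / (|s| − δ). -/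

import Mathlib

/-!
Put `w = u + ξ₀ / s`. Then `D^{(n,s)} w = (β ξ₀' - i n β ξ₀) / s`, whose weighted norms are at most
`C = (A + |n| B) / |s|`. The integrating factor turns the equation into
`(e^{-inβ} β^{-s} w)' = e^{-inβ} β^{-s-1} D^{(n,s)} w`; since `w` is bounded, `e^{-inβ} β^{-s} w`
vanishes at `0` when `s < 0` and at `∞` when `s > 0`, so integrating from that end against the bound
`|D^{(n,s)} w| ≤ C β^{∓δ}` gives `β^{±δ} |w| ≤ C / (|s| - δ)`.
-/

open Set Filter Topology

lemma norm_sub_le_of_norm_deriv_le_mul_rpow {E : Type*} [NormedAddCommGroup E] [NormedSpace ℝ E]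
    {φ φ' : ℝ → E} {C p a b : ℝ} (ha : 0 < a) (hab : a ≤ b) (hp : p ≠ 0)
    (hφ : ∀ t ∈ Icc a b, HasDerivAt φ (φ' t) t) (hφ' : ∀ t ∈ Icc a b, ‖φ' t‖ ≤ C * t ^ (p - 1)) :
    ‖φ b - φ a‖ ≤ C / p * (b ^ p - a ^ p) := by
  have hpos : ∀ t ∈ Icc a b, t ≠ 0 := fun t ht => (ha.trans_le ht.1).ne'
  refine image_norm_le_of_norm_deriv_right_le_deriv_boundary' (f := fun t => φ t - φ a)
    (B := fun t => C / p * (t ^ p - a ^ p)) (B' := fun t => C * t ^ (p - 1))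
    (fun t ht => ((hφ t ht).continuousAt.sub continuousAt_const).continuousWithinAt)
    (fun t ht => ((hφ t (Ico_subset_Icc_self ht)).sub_const (φ a)).hasDerivWithinAt)
    (by simp) (fun t ht => ?_) (fun t ht => ?_)
    (fun t ht => hφ' t (Ico_subset_Icc_self ht)) (right_mem_Icc.2 hab)
  · exact ((Real.continuousAt_rpow_const t p (Or.inl (hpos t ht))).sub
      continuousAt_const).const_mul _ |>.continuousWithinAt
  · have h := ((Real.hasDerivAt_rpow_const (p := p)
      (Or.inl (hpos t (Ico_subset_Icc_self ht)))).sub_const (a ^ p)).const_mul (C / p)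
    rw [show C / p * (p * t ^ (p - 1)) = C * t ^ (p - 1) by field_simp] at h
    exact h.hasDerivWithinAt

lemma tendsto_rpow_nhdsGT_zero {p : ℝ} (hp : 0 < p) :
    Tendsto (fun x : ℝ => x ^ p) (𝓝[>] 0) (𝓝 0) := by
  simpa [Real.zero_rpow hp.ne'] using
    (Real.continuousAt_rpow_const 0 p (Or.inr hp.le)).tendsto.mono_left nhdsWithin_le_nhds

lemma norm_le_div_mul_rpow_of_tendsto_nhdsGT_zero {E : Type*} [NormedAddCommGroup E]
    [NormedSpace ℝ E]
    {φ φ' : ℝ → E} {C p β : ℝ} (hp : 0 < p) (hβ : 0 < β)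
    (hφ : ∀ t, 0 < t → HasDerivAt φ (φ' t) t) (hφ' : ∀ t, 0 < t → ‖φ' t‖ ≤ C * t ^ (p - 1))
    (hlim : Tendsto φ (𝓝[>] 0) (𝓝 0)) :
    ‖φ β‖ ≤ C / p * β ^ p := by
  have hbound : ∀ᶠ γ in 𝓝[>] 0, ‖φ β‖ ≤ ‖φ γ‖ + C / p * (β ^ p - γ ^ p) := by
    filter_upwards [Ioc_mem_nhdsGT hβ] with γ ⟨hγ, hγβ⟩
    calc ‖φ β‖ ≤ ‖φ γ‖ + ‖φ β - φ γ‖ := norm_le_insert' _ _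
      _ ≤ ‖φ γ‖ + C / p * (β ^ p - γ ^ p) := by
        gcongr
        exact norm_sub_le_of_norm_deriv_le_mul_rpow hγ hγβ hp.ne'
          (fun t ht => hφ t (hγ.trans_le ht.1)) (fun t ht => hφ' t (hγ.trans_le ht.1))
  have := ge_of_tendsto (hlim.norm.add (((tendsto_rpow_nhdsGT_zero hp).const_sub _).const_mul _))
    hbound
  simpa using this

lemma norm_le_div_mul_rpow_of_tendsto_atTop_zero {E : Type*} [NormedAddCommGroup E]
    [NormedSpace ℝ E]
    {φ φ' : ℝ → E} {C p β : ℝ} (hp : p < 0) (hβ : 0 < β)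
    (hφ : ∀ t, 0 < t → HasDerivAt φ (φ' t) t) (hφ' : ∀ t, 0 < t → ‖φ' t‖ ≤ C * t ^ (p - 1))
    (hlim : Tendsto φ atTop (𝓝 0)) :
    ‖φ β‖ ≤ C / -p * β ^ p := by
  have hbound : ∀ᶠ γ in atTop, ‖φ β‖ ≤ ‖φ γ‖ + C / p * (γ ^ p - β ^ p) := by
    filter_upwards [eventually_ge_atTop β] with γ hβγ
    calc ‖φ β‖ ≤ ‖φ γ‖ + ‖φ γ - φ β‖ := norm_le_insert _ _
      _ ≤ ‖φ γ‖ + C / p * (γ ^ p - β ^ p) := by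
        gcongr
        exact norm_sub_le_of_norm_deriv_le_mul_rpow hβ hβγ hp.ne
          (fun t ht => hφ t (hβ.trans_le ht.1)) (fun t ht => hφ' t (hβ.trans_le ht.1))
  have hpow : Tendsto (fun γ : ℝ => γ ^ p) atTop (𝓝 0) := by
    simpa using tendsto_rpow_neg_atTop (neg_pos.2 hp)
  have := ge_of_tendsto (hlim.norm.add ((hpow.sub_const _).const_mul _)) hbound
  rwa [norm_zero, zero_add, zero_sub, mul_neg, ← neg_mul, ← div_neg] at this

/-- The operator `D^{(n,s)}`. -/
noncomputable def eulerOp (n : ℤ) (s : ℝ) (f : ℝ → ℂ) (β : ℝ) : ℂ :=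
  (β : ℂ) * (deriv f β - Complex.I * (n : ℂ) * f β) - (s : ℂ) * f β

noncomputable def integratingFactor (n : ℤ) (s t : ℝ) : ℂ :=
  Complex.exp (-(Complex.I * n * t)) * ((t ^ (-s) : ℝ) : ℂ)

section integratingFactor

variable {n : ℤ} {s t : ℝ}

lemma norm_integratingFactor (ht : 0 ≤ t) : ‖integratingFactor n s t‖ = t ^ (-s) := by
  rw [integratingFactor, norm_mul, Complex.norm_exp, Complex.norm_real,
    Real.norm_of_nonneg (Real.rpow_nonneg ht _)]
  simp

lemma hasDerivAt_integratingFactor_mul {f : ℝ → ℂ} (ht : 0 < t) (hf : DifferentiableAt ℝ f t) :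
    HasDerivAt (fun t => integratingFactor n s t * f t)
      (integratingFactor n s t * ((t : ℂ)⁻¹ * eulerOp n s f t)) t := by
  have hexp : HasDerivAt (fun t : ℝ => Complex.exp (-(Complex.I * n * t)))
      (-(Complex.I * n) * Complex.exp (-(Complex.I * n * t))) t := by
    simpa [mul_comm] using ((hasDerivAt_id (t : ℂ)).const_mul (-(Complex.I * n))).cexp.comp_ofReal
  have hpow : HasDerivAt (fun t : ℝ => ((t ^ (-s) : ℝ) : ℂ)) (((-s * t ^ (-s - 1) : ℝ)) : ℂ) t :=
    (Real.hasDerivAt_rpow_const (Or.inl ht.ne')).ofReal_comp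
  refine ((hexp.mul hpow).mul hf.hasDerivAt).congr_deriv ?_
  have ht' : (t : ℂ) ≠ 0 := by exact_mod_cast ht.ne'
  simp only [Pi.mul_apply]
  rw [Real.rpow_sub ht, Real.rpow_one, integratingFactor, eulerOp]
  push_cast
  field_simp
  ring

end integratingFactor

lemma norm_integratingFactor_mul_le {n : ℤ} {s e C M β : ℝ} {w : ℝ → ℂ} (he : |e| < |s|)
    (hw : ∀ t, 0 < t → DifferentiableAt ℝ w t) (hM : ∀ t, 0 < t → ‖w t‖ ≤ M)
    (hD : ∀ t, 0 < t → t ^ e * ‖eulerOp n s w t‖ ≤ C) (hβ : 0 < β) :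
    ‖integratingFactor n s β * w β‖ ≤ C / |s + e| * β ^ (-s - e) := by
  set φ := fun t => integratingFactor n s t * w t
  have hφ : ∀ t, 0 < t →
      HasDerivAt φ (integratingFactor n s t * ((t : ℂ)⁻¹ * eulerOp n s w t)) t :=
    fun t ht => hasDerivAt_integratingFactor_mul ht (hw t ht)
  have hφ' : ∀ t, 0 < t →
      ‖integratingFactor n s t * ((t : ℂ)⁻¹ * eulerOp n s w t)‖ ≤ C * t ^ (-s - e - 1) := by
    intro t ht
    rw [norm_mul, norm_mul, norm_integratingFactor ht.le, norm_inv, Complex.norm_real,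
      Real.norm_of_nonneg ht.le]
    calc t ^ (-s) * (t⁻¹ * ‖eulerOp n s w t‖)
        = t ^ (-s - e - 1) * (t ^ e * ‖eulerOp n s w t‖) := by
          rw [Real.rpow_sub ht, Real.rpow_sub ht, Real.rpow_one, Real.rpow_neg ht.le]
          field_simp
      _ ≤ C * t ^ (-s - e - 1) := by
          rw [mul_comm C]
          exact mul_le_mul_of_nonneg_left (hD t ht) (Real.rpow_nonneg ht.le _)
  have hφM : ∀ t, 0 < t → ‖φ t‖ ≤ M * t ^ (-s) := fun t ht => by
    rw [norm_mul, norm_integratingFactor ht.le, mul_comm M]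
    exact mul_le_mul_of_nonneg_left (hM t ht) (Real.rpow_nonneg ht.le _)
  rcases lt_trichotomy s 0 with hs | hs | hs
  · have hp : 0 < -s - e := by linarith [abs_of_neg hs, le_abs_self e]
    have hlim : Tendsto φ (𝓝[>] 0) (𝓝 0) := squeeze_zero_norm'
      (eventually_nhdsWithin_of_forall hφM)
      (by simpa using (tendsto_rpow_nhdsGT_zero (neg_pos.2 hs)).const_mul M)
    rw [abs_of_neg (by linarith : s + e < 0), neg_add']
    exact norm_le_div_mul_rpow_of_tendsto_nhdsGT_zero hp hβ hφ hφ' hlim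
  · rw [hs, abs_zero] at he
    linarith [abs_nonneg e]
  · have hp : -s - e < 0 := by linarith [abs_of_pos hs, neg_abs_le e]
    have hlim : Tendsto φ atTop (𝓝 0) := squeeze_zero_norm'
      ((eventually_gt_atTop 0).mono hφM)
      (by simpa using (tendsto_rpow_neg_atTop hs).const_mul M)
    rw [abs_of_pos (by linarith : 0 < s + e), show s + e = -(-s - e) by ring]
    exact norm_le_div_mul_rpow_of_tendsto_atTop_zero hp hβ hφ hφ' hlim

theorem rpow_mul_norm_le_of_rpow_mul_norm_eulerOp_le {n : ℤ} {s e C M β : ℝ} {w : ℝ → ℂ}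
    (he : |e| < |s|) (hw : ∀ t, 0 < t → DifferentiableAt ℝ w t) (hM : ∀ t, 0 < t → ‖w t‖ ≤ M)
    (hD : ∀ t, 0 < t → t ^ e * ‖eulerOp n s w t‖ ≤ C) (hβ : 0 < β) :
    β ^ e * ‖w β‖ ≤ C / (|s| - |e|) := by
  have hC : 0 ≤ C := (by positivity : (0 : ℝ) ≤ 1 ^ e * ‖eulerOp n s w 1‖).trans (hD 1 one_pos)
  have hse : |s| - |e| ≤ |s + e| := by
    simpa using abs_sub_abs_le_abs_sub s (-e)
  calc β ^ e * ‖w β‖ = β ^ (s + e) * ‖integratingFactor n s β * w β‖ := by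
        rw [norm_mul, norm_integratingFactor hβ.le, ← mul_assoc, ← Real.rpow_add hβ]
        ring_nf
    _ ≤ β ^ (s + e) * (C / |s + e| * β ^ (-s - e)) := by
        gcongr
        exact norm_integratingFactor_mul_le he hw hM hD hβ
    _ = C / |s + e| := by
        rw [mul_left_comm, ← Real.rpow_add hβ, show s + e + (-s - e) = 0 by ring, Real.rpow_zero,
          mul_one]
    _ ≤ C / (|s| - |e|) := div_le_div_of_nonneg_left hC (by linarith) hse

lemma eulerOp_add_one_div_mul {n : ℤ} {s t : ℝ} {u ξ : ℝ → ℂ} (hs : s ≠ 0)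
    (hu : DifferentiableAt ℝ u t) (hξ : DifferentiableAt ℝ ξ t) (hode : eulerOp n s u t = ξ t) :
    eulerOp n s (fun t => u t + 1 / (s : ℂ) * ξ t) t =
      1 / (s : ℂ) * ((t : ℂ) * deriv ξ t - Complex.I * n * ((t : ℂ) * ξ t)) := by
  have hs' : (s : ℂ) ≠ 0 := by exact_mod_cast hs
  have hd : HasDerivAt (fun t => u t + 1 / (s : ℂ) * ξ t) (deriv u t + 1 / s * deriv ξ t) t :=
    hu.hasDerivAt.add (hξ.hasDerivAt.const_mul _)
  rw [eulerOp, hd.deriv]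
  rw [eulerOp] at hode
  linear_combination hode - ξ t * mul_inv_cancel₀ hs'

lemma mul_norm_one_div_mul_sub_le {n : ℤ} {s x A B : ℝ} {a b : ℂ} (hx : 0 ≤ x)
    (ha : x * ‖a‖ ≤ A) (hb : x * ‖b‖ ≤ B) :
    x * ‖1 / (s : ℂ) * (a - Complex.I * n * b)‖ ≤ (A + |(n : ℝ)| * B) / |s| := by
  calc x * ‖1 / (s : ℂ) * (a - Complex.I * n * b)‖ = x * ‖a - Complex.I * n * b‖ / |s| := by
        rw [norm_mul, norm_div, norm_one, Complex.norm_real, Real.norm_eq_abs]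
        ring
    _ ≤ (x * (‖a‖ + ‖Complex.I * n * b‖)) / |s| := by
        gcongr
        exact norm_sub_le _ _
    _ = (x * ‖a‖ + |(n : ℝ)| * (x * ‖b‖)) / |s| := by
        simp only [norm_mul, Complex.norm_I, Complex.norm_intCast]
        ring
    _ ≤ (A + |(n : ℝ)| * B) / |s| := by gcongr

theorem stmt13_general (δ : ℝ) (hδ : 0 < δ) (n : ℤ) (s : ℝ) (hs : δ < |s|)
    (ξ₀ : ℝ → ℂ)
    (hξb : ∃ M : ℝ, ∀ β : ℝ, 0 ≤ β → ‖ξ₀ β‖ ≤ M)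
    (hξd : ∀ β : ℝ, 0 < β → DifferentiableAt ℝ ξ₀ β)
    (A B : ℝ)
    (hA : ∀ β : ℝ, 0 < β →
      β ^ δ * ‖(β : ℂ) * deriv ξ₀ β‖ ≤ A ∧
      β ^ (-δ) * ‖(β : ℂ) * deriv ξ₀ β‖ ≤ A)
    (hB : ∀ β : ℝ, 0 < β →
      β ^ δ * ‖(β : ℂ) * ξ₀ β‖ ≤ B ∧
      β ^ (-δ) * ‖(β : ℂ) * ξ₀ β‖ ≤ B)
    (u : ℝ → ℂ)
    (hub : ∃ M : ℝ, ∀ β : ℝ, 0 ≤ β → ‖u β‖ ≤ M)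
    (hud : ∀ β : ℝ, 0 < β → DifferentiableAt ℝ u β)
    (hode : ∀ β : ℝ, 0 < β →
      (β : ℂ) * (deriv u β - Complex.I * (n : ℂ) * u β) - (s : ℂ) * u β = ξ₀ β) :
    ∀ β : ℝ, 0 < β →
      β ^ δ * ‖u β + (1 / (s : ℂ)) * ξ₀ β‖ ≤
        (1 / |s|) * ((A + |(n : ℝ)| * B) / (|s| - δ)) ∧
      β ^ (-δ) * ‖u β + (1 / (s : ℂ)) * ξ₀ β‖ ≤
        (1 / |s|) * ((A + |(n : ℝ)| * B) / (|s| - δ)) := by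
  intro β hβ
  have hs0 : s ≠ 0 := abs_pos.1 (hδ.trans hs)
  obtain ⟨Mu, hMu⟩ := hub
  obtain ⟨Mξ, hMξ⟩ := hξb
  have hwM : ∀ t : ℝ, 0 < t → ‖u t + 1 / (s : ℂ) * ξ₀ t‖ ≤ Mu + ‖1 / (s : ℂ)‖ * Mξ :=
    fun t ht => (norm_add_le _ _).trans <| by
      rw [norm_mul]
      gcongr
      exacts [hMu t ht.le, hMξ t ht.le]
  have hw : ∀ e : ℝ, |e| = δ → (∀ t : ℝ, 0 < t → t ^ e * ‖(t : ℂ) * deriv ξ₀ t‖ ≤ A) →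
      (∀ t : ℝ, 0 < t → t ^ e * ‖(t : ℂ) * ξ₀ t‖ ≤ B) →
      β ^ e * ‖u β + 1 / (s : ℂ) * ξ₀ β‖ ≤ (1 / |s|) * ((A + |(n : ℝ)| * B) / (|s| - δ)) := by
    intro e he hAe hBe
    rw [← he, show (1 / |s|) * ((A + |(n : ℝ)| * B) / (|s| - |e|)) =
      (A + |(n : ℝ)| * B) / |s| / (|s| - |e|) by ring]
    refine rpow_mul_norm_le_of_rpow_mul_norm_eulerOp_le (n := n)
      (w := fun t => u t + 1 / (s : ℂ) * ξ₀ t) (he ▸ hs)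
      (fun t ht => (hud t ht).add ((hξd t ht).const_mul _)) hwM (fun t ht => ?_) hβ
    rw [eulerOp_add_one_div_mul hs0 (hud t ht) (hξd t ht) (hode t ht)]
    exact mul_norm_one_div_mul_sub_le (Real.rpow_nonneg ht.le _) (hAe t ht) (hBe t ht)
  exact ⟨hw δ (abs_of_pos hδ) (fun t ht => (hA t ht).1) (fun t ht => (hB t ht).1),
    hw (-δ) (by rw [abs_neg, abs_of_pos hδ]) (fun t ht => (hA t ht).2) (fun t ht => (hB t ht).2)⟩

/-- **Action of the inverse of `D^{(n,s)}` on an inner cutoff.**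
Let `δ > 0`, `|s| > δ`, and let `ξ₀` be bounded, continuous on `[0,∞)`, differentiable on
`(0,∞)`, with `β ξ₀'` and `β ξ₀` in `C_b^δ` (with bounds `A` resp. `B`). If `u` is the
(unique) bounded continuous solution of `D^{(n,s)} u = ξ₀` on `(0,∞)`, then
`u + (1/s) ξ₀ ∈ C_b^δ` with `‖u + (1/s)ξ₀‖_{C_b^δ} ≤ (1/|s|)(A + |n| B)/(|s| − δ)`. -/
theorem stmt13 (δ : ℝ) (hδ : 0 < δ) (n : ℤ) (s : ℝ) (hs : δ < |s|)
    (ξ₀ : ℝ → ℂ)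
    (hξc : ContinuousOn ξ₀ (Set.Ici 0))
    (hξb : ∃ M : ℝ, ∀ β : ℝ, 0 ≤ β → ‖ξ₀ β‖ ≤ M)
    (hξd : ∀ β : ℝ, 0 < β → DifferentiableAt ℝ ξ₀ β)
    (A B : ℝ)
    (hA : ∀ β : ℝ, 0 < β →
      β ^ δ * ‖(β : ℂ) * deriv ξ₀ β‖ ≤ A ∧
      β ^ (-δ) * ‖(β : ℂ) * deriv ξ₀ β‖ ≤ A)
    (hB : ∀ β : ℝ, 0 < β →
      β ^ δ * ‖(β : ℂ) * ξ₀ β‖ ≤ B ∧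
      β ^ (-δ) * ‖(β : ℂ) * ξ₀ β‖ ≤ B)
    (u : ℝ → ℂ)
    (huc : ContinuousOn u (Set.Ici 0))
    (hub : ∃ M : ℝ, ∀ β : ℝ, 0 ≤ β → ‖u β‖ ≤ M)
    (hud : ∀ β : ℝ, 0 < β → DifferentiableAt ℝ u β)
    (hode : ∀ β : ℝ, 0 < β →
      (β : ℂ) * (deriv u β - Complex.I * (n : ℂ) * u β) - (s : ℂ) * u β = ξ₀ β) :
    ∀ β : ℝ, 0 < β →
      β ^ δ * ‖u β + (1 / (s : ℂ)) * ξ₀ β‖ ≤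
        (1 / |s|) * ((A + |(n : ℝ)| * B) / (|s| - δ)) ∧
      β ^ (-δ) * ‖u β + (1 / (s : ℂ)) * ξ₀ β‖ ≤
        (1 / |s|) * ((A + |(n : ℝ)| * B) / (|s| - δ)) :=
  stmt13_general δ hδ n s hs ξ₀ hξb hξd A B hA hB u hub hud hode
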